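/- arXiv:1305.5960 — 4 statements merged into one kernel-verified Lean document; each statement's English description precedes it below -/
import Mathlib

section
/- Let 𝒳_1, 𝒳_2, …, 𝒳_s and 𝒴 be finite sets. For any discrete function g : ∏_{t=1}^s 𝒳_t → 𝒴 there exist a finite field 𝔉, functions k_t : 𝒳_t → 𝔉 (t = 1,…,s) and a function h : 𝔉 → 𝒴 such that g(x_1, x_2, …, x_s) = h(∑_{t=1}^s k_t(x_t)) for all (x_1,…,x_s) ∈ ∏_{t=1}^s 𝒳_t. -/
open Finset

/-!
Encode `x ∈ ∏ₜ 𝒳ₜ` by its mixed-radix number `∑ₜ kₜ(xₜ) < ∏ₜ |𝒳ₜ|`; this is injective and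
additive in the coordinates. Reducing modulo a prime `p > ∏ₜ |𝒳ₜ|` keeps it injective, so `g`
factors through the sum in `𝔽_p`.
-/

theorem exists_injective_sum_nat_lt_prod_card {s : ℕ} (X : Fin s → Type*)
    [∀ t, Fintype (X t)] :
    ∃ k : ∀ t, X t → ℕ, Function.Injective (fun x : ∀ t, X t => ∑ t, k t (x t)) ∧
      ∀ x : ∀ t, X t, ∑ t, k t (x t) < ∏ t, Fintype.card (X t) := by
  let e : ∀ t, X t ≃ Fin (Fintype.card (X t)) := fun t => Fintype.equivFin (X t)
  let digits : (∀ t, X t) ≃ Fin (∏ t, Fintype.card (X t)) :=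
    (Equiv.piCongrRight e).trans finPiFinEquiv
  have digits_val (x : ∀ t, X t) : (digits x : ℕ) =
      ∑ t, (e t (x t) : ℕ) * ∏ j, Fintype.card (X (Fin.castLE t.is_lt.le j)) :=
    finPiFinEquiv_apply _
  refine ⟨fun t a => e t a * ∏ j, Fintype.card (X (Fin.castLE t.is_lt.le j)), ?_, ?_⟩
  · intro x y hxy
    simp only [← digits_val] at hxy
    exact digits.injective (Fin.ext hxy)
  · intro x
    simp only [← digits_val]
    exact (digits x).is_lt

theorem ZMod.natCast_injOn_Iio (p : ℕ) : Set.InjOn (Nat.cast : ℕ → ZMod p) (Set.Iio p) :=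
  fun a ha b hb hab => by
    rwa [ZMod.natCast_eq_natCast_iff', Nat.mod_eq_of_lt ha, Nat.mod_eq_of_lt hb] at hab

theorem exists_prime_injective_sum_zmod {s : ℕ} (X : Fin s → Type*) [∀ t, Fintype (X t)] :
    ∃ p : ℕ, p.Prime ∧ ∃ k : ∀ t, X t → ZMod p,
      Function.Injective (fun x : ∀ t, X t => ∑ t, k t (x t)) := by
  obtain ⟨k, hk_inj, hk_lt⟩ := exists_injective_sum_nat_lt_prod_card X
  obtain ⟨p, hNp, hp⟩ := Nat.exists_infinite_primes (∏ t, Fintype.card (X t) + 1)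
  have hlt (x : ∀ t, X t) : ∑ t, k t (x t) ∈ Set.Iio p := (hk_lt x).trans_le (by omega)
  refine ⟨p, hp, fun t a => (k t a : ZMod p), fun x y hxy => hk_inj ?_⟩
  simp only [← Nat.cast_sum] at hxy
  exact ZMod.natCast_injOn_Iio p (hlt x) (hlt y) hxy

theorem stmt4_general {s : ℕ} {X : Fin s → Type*} [∀ t, Fintype (X t)]
    {Y : Type*} [Nonempty Y] (g : (∀ t, X t) → Y) :
    ∃ (F : Type) (_ : Field F) (_ : Fintype F)
      (k : ∀ t, X t → F) (h : F → Y),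
      ∀ x : ∀ t, X t, g x = h (∑ t, k t (x t)) := by
  obtain ⟨p, hp, k, hk⟩ := exists_prime_injective_sum_zmod X
  have : Fact p.Prime := ⟨hp⟩
  exact ⟨ZMod p, inferInstance, inferInstance, k,
    Function.extend (fun x => ∑ t, k t (x t)) g (fun _ => Classical.arbitrary Y),
    fun x => (hk.extend_apply g _ x).symm⟩

/-- Any discrete function `g` of `s` variables on finite sets admits a presentation
`g(x_1,…,x_s) = h(∑_t k_t(x_t))` over some finite field. -/
theorem stmt4 {s : ℕ} {X : Fin s → Type*} [∀ t, Fintype (X t)]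
    {Y : Type*} [Fintype Y] [Nonempty Y] (g : (∀ t, X t) → Y) :
    ∃ (F : Type) (_ : Field F) (_ : Fintype F)
      (k : ∀ t, X t → F) (h : F → Y),
      ∀ x : ∀ t, X t, g x = h (∑ t, k t (x t)) :=
  stmt4_general g
end

section
/- Let 𝔎 be a finite ring and M = (X^(n)) an irreducible (finite-state, homogeneous) Markov chain whose state space is 𝔎, with transition matrix P and invariant distribution π = [p_j]_{j∈𝔎}. For any η > 0 there exist ε₀ > 0 and N₀ ∈ ℕ⁺ such that for all 0 < ε < ε₀, all n > N₀, every x ∈ S_ε(n,P) and every left ideal 𝔍 of 𝔎, the set S_ε(x,𝔍) = { y ∈ S_ε(n,P) : y − x ∈ 𝔍^n } satisfies |S_ε(x,𝔍)| < exp₂{ n [ ∑_{A ∈ 𝔎/𝔍} (∑_{j∈A} p_j) · H(S_A | π_A) + η ] }. -/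
open Finset

/-- `N(i,j;x)`: number of occurrences of the consecutive pair `[i, j]` in the sequence `x`. -/
noncomputable def pairCount {X : Type*} [DecidableEq X] (x : List X) (i j : X) : ℕ :=
  (x.zip x.tail).count (i, j)

/-- `N(i;x) = ∑_j N(i,j;x)`. -/
noncomputable def stateCount {X : Type*} [Fintype X] [DecidableEq X] (x : List X) (i : X) : ℕ :=
  ∑ j, pairCount x i j

/-- `x` is strongly Markov ε-typical with respect to the stochastic matrix `Q`
whose invariant distribution is `q`. -/
def SMTypical {X : Type*} [Fintype X] [DecidableEq X]
    (Q : X → X → ℝ) (q : X → ℝ) (ε : ℝ) (x : List X) : Prop :=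
  ∀ i j : X,
    |(pairCount x i j : ℝ) / (stateCount x i : ℝ) - Q i j| < ε ∧
    |(stateCount x i : ℝ) / (x.length : ℝ) - q i| < ε

/-- `P` is a stochastic matrix. -/
def IsStochasticMat {X : Type*} [Fintype X] (P : X → X → ℝ) : Prop :=
  (∀ i j, 0 ≤ P i j) ∧ ∀ i, ∑ j, P i j = 1

/-- `P` is irreducible: there is no nonempty `A ⊊ X` with `P_{A,Aᶜ} = 0`. -/
def IsIrreducibleMat {X : Type*} [Fintype X] (P : X → X → ℝ) : Prop :=
  ∀ A : Finset X, A.Nonempty → A ≠ Finset.univ → ∃ i ∈ A, ∃ j ∉ A, P i j ≠ 0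

/-- `π` is an invariant (stationary) distribution of `P`. -/
def IsInvariantDist {X : Type*} [Fintype X] (P : X → X → ℝ) (π : X → ℝ) : Prop :=
  (∀ i, 0 ≤ π i) ∧ ∑ i, π i = 1 ∧ ∀ j, ∑ i, π i * P i j = π j

/-- Probability that the stationary Markov chain with initial (invariant) distribution `π`
and transition matrix `P` emits the finite path `x`. -/
noncomputable def pathProb {X : Type*} (π : X → ℝ) (P : X → X → ℝ) (x : List X) : ℝ :=
  (x.head?.elim 1 π) * ((x.zip x.tail).map fun p => P p.1 p.2).prod

/-- `H(P|π) = -∑_{i,j} π_i P_{ij} log₂ P_{ij}`. -/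
noncomputable def mcCondEnt {X : Type*} [Fintype X] (P : X → X → ℝ) (π : X → ℝ) : ℝ :=
  -∑ i, ∑ j, π i * P i j * Real.logb 2 (P i j)

/-- The stochastic complement `S_A = P_{A,A} + P_{A,Aᶜ} (1 - P_{Aᶜ,Aᶜ})⁻¹ P_{Aᶜ,A}`
of `P_{A,A}` in `P`. -/
noncomputable def stochComp {X : Type*} [Fintype X] [DecidableEq X]
    (P : X → X → ℝ) (A : Finset X) :
    {i : X // i ∈ A} → {i : X // i ∈ A} → ℝ := fun i j =>
  ((Matrix.of fun a b : {i : X // i ∈ A} => P a.1 b.1) +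
    (Matrix.of fun (a : {i : X // i ∈ A}) (b : {i : X // i ∉ A}) => P a.1 b.1) *
      (1 - Matrix.of fun a b : {i : X // i ∉ A} => P a.1 b.1)⁻¹ *
      (Matrix.of fun (a : {i : X // i ∉ A}) (b : {i : X // i ∈ A}) => P a.1 b.1)) i j

/-- The subsequence of `x` formed by all entries lying in `A`, in their original order. -/
noncomputable def subListIn {X : Type*} [DecidableEq X] (x : List X) (A : Finset X) :
    List {i : X // i ∈ A} :=
  x.filterMap fun a => if h : a ∈ A then some ⟨a, h⟩ else none

/-- `x` is Supremus ε-typical with respect to `P`: for every nonempty `A ⊆ X` the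
subsequence `x_A` is strongly Markov ε-typical with respect to the stochastic
complement `S_A` (whose invariant distribution is the normalized restriction of `π`). -/
def SupTypical {X : Type*} [Fintype X] [DecidableEq X]
    (P : X → X → ℝ) (π : X → ℝ) (ε : ℝ) (x : List X) : Prop :=
  ∀ A : Finset X, A.Nonempty →
    SMTypical (stochComp P A) (fun i : {i : X // i ∈ A} => π i.1 / ∑ j ∈ A, π j) ε
      (subListIn x A)

/-- `H(S_A | π_A)`: the conditional entropy of the stochastic complement `S_A`
with respect to its invariant distribution `π_A`. -/
noncomputable def scCondEnt {X : Type*} [Fintype X] [DecidableEq X]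
    (P : X → X → ℝ) (π : X → ℝ) (A : Finset X) : ℝ :=
  -∑ i : {i : X // i ∈ A}, ∑ j : {i : X // i ∈ A},
    (π i.1 / ∑ l ∈ A, π l) * stochComp P A i j * Real.logb 2 (stochComp P A i j)

open scoped Classical

/-- The set of additive cosets `K/I` of a left ideal `I`, each represented as a `Finset`. -/
noncomputable def cosetsOf {K : Type*} [Ring K] [Fintype K] (I : Ideal K) :
    Finset (Finset K) :=
  Finset.univ.image fun x : K => Finset.univ.filter fun y => y - x ∈ I

/-- `H(S_{K/I} | π) = ∑_{A ∈ K/I} (∑_{j∈A} π_j) H(S_A | π_A)`. -/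
noncomputable def ringHS {K : Type*} [Ring K] [Fintype K] [DecidableEq K]
    (P : K → K → ℝ) (π : K → ℝ) (I : Ideal K) : ℝ :=
  ∑ A ∈ cosetsOf I, (∑ j ∈ A, π j) * scCondEnt P π A

/-
Method of types. For `y ∈ S_ε(x,𝔍)` each entry `y_l` lies in the coset of `x_l`, so for every
coset `A` the subsequence `y_A` has the same length `m_A` as `x_A`, and `y` is determined by the
family `(y_A)_A`. Hence `|S_ε(x,𝔍)|` is at most the product over the cosets of the number of
sequences of length `m_A` that are strongly typical for `S_A`.

All sequences with the same pair counts `N(i,j)` have the same probability `2^{-E}` under the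
empirical transition matrix `N(i,j)/N(i)`, where `E = ∑ N(i) φ(N(i,j)/N(i))` and
`φ(t) = -t log₂ t`; so such a type class has at most `|A| 2^E` elements. Typicality together
with the uniform continuity of `φ` gives `E ≤ m_A (H(S_A|π_A) + δ)`, and there are only
polynomially many types. Finally, typicality of `x` for `A = 𝔎` gives
`m_A = n ∑_{j∈A} p_j + O(nε + 1)`, which turns `∑_A m_A H(S_A|π_A)` into
`n ∑_A (∑_{j∈A} p_j) H(S_A|π_A)` up to an error that `η n` absorbs.
-/

noncomputable def negMulLogb (t : ℝ) : ℝ := -(t * Real.logb 2 t)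

@[simp] lemma negMulLogb_zero : negMulLogb 0 = 0 := by simp [negMulLogb]

lemma continuous_negMulLogb : Continuous negMulLogb := by
  have h : negMulLogb = fun t => Real.negMulLog t / Real.log 2 := by
    ext t
    simp only [negMulLogb, Real.negMulLog, Real.logb]
    ring
  exact h ▸ Real.continuous_negMulLog.div_const _

lemma mcCondEnt_eq_sum_negMulLogb {β : Type*} [Fintype β] (Q : β → β → ℝ) (q : β → ℝ) :
    mcCondEnt Q q = ∑ i, ∑ j, q i * negMulLogb (Q i j) := by
  simp only [mcCondEnt, negMulLogb, mul_neg, ← mul_assoc, Finset.sum_neg_distrib]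

lemma exists_abs_negMulLogb_le : ∃ M, 0 ≤ M ∧ ∀ t ∈ Set.Icc (-1 : ℝ) 2, |negMulLogb t| ≤ M := by
  obtain ⟨M, hM⟩ := isCompact_Icc.exists_bound_of_continuousOn continuous_negMulLogb.continuousOn
  exact ⟨max M 0, le_max_right _ _, fun t ht => (hM t ht).trans (le_max_left _ _)⟩

lemma abs_mcCondEnt_le {β : Type*} [Fintype β] {Q : β → β → ℝ} {q : β → ℝ} {M : ℝ}
    (hq : ∀ i, q i ∈ Set.Icc (0 : ℝ) 1) (hQ : ∀ i j, |negMulLogb (Q i j)| ≤ M) :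
    |mcCondEnt Q q| ≤ Fintype.card β ^ 2 * M := by
  rw [mcCondEnt_eq_sum_negMulLogb]
  calc |∑ i, ∑ j, q i * negMulLogb (Q i j)| ≤ ∑ _i : β, ∑ _j : β, M := by
        refine (Finset.abs_sum_le_sum_abs _ _).trans (Finset.sum_le_sum fun i _ => ?_)
        refine (Finset.abs_sum_le_sum_abs _ _).trans (Finset.sum_le_sum fun j _ => ?_)
        rw [abs_mul, abs_of_nonneg (hq i).1]
        exact (mul_le_of_le_one_left (abs_nonneg _) (hq i).2).trans (hQ i j)
    _ = Fintype.card β ^ 2 * M := by simp [sq, mul_assoc]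

/-- In its application `s` is the number of visits `N(i)` to a state, `m q` its expected value,
and `r`, `t` are an empirical and the true transition probability out of that state. -/
lemma exists_mul_negMulLogb_le {δ : ℝ} (hδ : 0 < δ) :
    ∃ ε₀ > 0, ∀ ε < ε₀, ∀ m s r t q : ℝ, 0 ≤ m → r ∈ Set.Icc (0 : ℝ) 1 → q ∈ Set.Icc (0 : ℝ) 1 →
      |s - m * q| ≤ m * ε → |r - t| < ε → s * negMulLogb r ≤ m * (q * negMulLogb t + δ) := by
  obtain ⟨M, hM0, hM⟩ := exists_abs_negMulLogb_le
  obtain ⟨ε₁, hε₁, huc⟩ := Metric.uniformContinuousOn_iff.mp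
    (isCompact_Icc.uniformContinuousOn_of_continuous continuous_negMulLogb.continuousOn)
    (δ / 2) (half_pos hδ)
  refine ⟨min 1 (min ε₁ (δ / (2 * (M + 1)))), by positivity,
    fun ε hε m s r t q hm hr hq hs hrt => ?_⟩
  simp only [lt_min_iff] at hε
  obtain ⟨hε1, hεε₁, hεM⟩ := hε
  have hr' : r ∈ Set.Icc (-1 : ℝ) 2 := ⟨by linarith [hr.1], by linarith [hr.2]⟩
  have ht : t ∈ Set.Icc (-1 : ℝ) 2 := by
    constructor <;> linarith [abs_lt.mp hrt, hr.1, hr.2]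
  have hgr := hM r hr'
  have hgt : |negMulLogb r - negMulLogb t| < δ / 2 :=
    huc r hr' t ht (by rw [Real.dist_eq]; linarith)
  have hεM' : ε * M ≤ δ / 2 := by
    rw [lt_div_iff₀ (by positivity)] at hεM
    nlinarith
  have h1 : (s - m * q) * negMulLogb r ≤ m * ε * M := by
    calc (s - m * q) * negMulLogb r ≤ |s - m * q| * |negMulLogb r| := by
          rw [← abs_mul]; exact le_abs_self _
      _ ≤ m * ε * M := mul_le_mul hs hgr (abs_nonneg _) (le_trans (abs_nonneg _) hs)
  have h2 : q * (negMulLogb r - negMulLogb t) ≤ δ / 2 := by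
    calc q * (negMulLogb r - negMulLogb t) ≤ |q| * |negMulLogb r - negMulLogb t| := by
          rw [← abs_mul]; exact le_abs_self _
      _ ≤ 1 * (δ / 2) := mul_le_mul (abs_le.mpr ⟨by linarith [hq.1], hq.2⟩) hgt.le
          (abs_nonneg _) zero_le_one
      _ = δ / 2 := one_mul _
  calc s * negMulLogb r = (s - m * q) * negMulLogb r + m * (q * negMulLogb t)
        + m * (q * (negMulLogb r - negMulLogb t)) := by ring
    _ ≤ m * ε * M + m * (q * negMulLogb t) + m * (δ / 2) := by gcongr
    _ ≤ m * (q * negMulLogb t + δ) := by nlinarith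

section Counts
variable {X : Type*} [Fintype X] [DecidableEq X]

lemma sum_count_pair_eq_count_map_fst (L : List (X × X)) (i : X) :
    ∑ j, L.count (i, j) = (L.map Prod.fst).count i := by
  induction L with
  | nil => simp
  | cons p L ih =>
    obtain ⟨a, b⟩ := p
    rcases eq_or_ne a i with rfl | h
    · simp [List.count_cons, Finset.sum_add_distrib, ih]
    · simp [ih, h]

lemma stateCount_eq_count_dropLast (l : List X) (i : X) :
    stateCount l i = l.dropLast.count i := by
  have hfst : (l.zip l.tail).map Prod.fst = l.dropLast := by
    rw [List.zip_eq_zip_take_min, List.map_fst_zip (by simp), List.dropLast_eq_take]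
    simp
  rw [stateCount, ← hfst]
  exact sum_count_pair_eq_count_map_fst _ i

lemma stateCount_le_count (l : List X) (i : X) : stateCount l i ≤ l.count i := by
  rw [stateCount_eq_count_dropLast]
  exact (List.dropLast_sublist l).count_le i

lemma count_le_stateCount_add_one (l : List X) (i : X) :
    l.count i ≤ stateCount l i + 1 := by
  rw [stateCount_eq_count_dropLast]
  rcases List.eq_nil_or_concat l with rfl | ⟨l', a, rfl⟩
  · simp
  · simp only [List.concat_eq_append, List.dropLast_concat, List.count_append]
    have : [a].count i ≤ 1 := List.count_le_length
    omega

lemma pairCount_le_stateCount (l : List X) (i j : X) :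
    pairCount l i j ≤ stateCount l i :=
  Finset.single_le_sum (f := pairCount l i) (fun _ _ => Nat.zero_le _) (Finset.mem_univ j)

omit [Fintype X] in
lemma pairCount_le_length (l : List X) (i j : X) : pairCount l i j ≤ l.length :=
  List.count_le_length.trans (by simp)

lemma div_stateCount_mem_Icc (l : List X) (i j : X) :
    (pairCount l i j : ℝ) / stateCount l i ∈ Set.Icc (0 : ℝ) 1 := by
  refine ⟨by positivity, div_le_one_of_le₀ ?_ (by positivity)⟩
  exact_mod_cast pairCount_le_stateCount l i j

lemma abs_stateCount_sub_le_of_SMTypical {Q : X → X → ℝ} {q : X → ℝ} {ε : ℝ} {l : List X}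
    (h : SMTypical Q q ε l) (i : X) :
    |(stateCount l i : ℝ) - l.length * q i| ≤ l.length * ε := by
  rcases Nat.eq_zero_or_pos l.length with hl | hl
  · have : stateCount l i = 0 := by
      have := (stateCount_le_count l i).trans List.count_le_length
      omega
    simp [this, hl]
  · have hL : (0 : ℝ) < l.length := by exact_mod_cast hl
    have key : (stateCount l i : ℝ) - l.length * q i =
        l.length * (stateCount l i / l.length - q i) := by
      field_simp
    rw [key, abs_mul, abs_of_pos hL]
    exact mul_le_mul_of_nonneg_left (h i i).2.le hL.le

lemma abs_count_sub_le_of_SMTypical {Q : X → X → ℝ} {q : X → ℝ} {ε : ℝ} {l : List X}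
    (h : SMTypical Q q ε l) (i : X) : |(l.count i : ℝ) - l.length * q i| ≤ l.length * ε + 1 := by
  have h₁ := abs_le.mp (abs_stateCount_sub_le_of_SMTypical h i)
  have h₂ : (stateCount l i : ℝ) ≤ l.count i := by exact_mod_cast stateCount_le_count l i
  have h₃ : (l.count i : ℝ) ≤ stateCount l i + 1 := by
    exact_mod_cast count_le_stateCount_add_one l i
  rw [abs_le]
  constructor <;> linarith [h₁.1, h₁.2]

lemma SMTypical.mem_Icc {Q : X → X → ℝ} {q : X → ℝ} {ε : ℝ} {l : List X}
    (h : SMTypical Q q ε l) (hε : ε ≤ 1) (i j : X) : Q i j ∈ Set.Icc (-1 : ℝ) 2 := by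
  have hr := div_stateCount_mem_Icc l i j
  have hd := abs_lt.mp (h i j).1
  constructor <;> linarith [hr.1, hr.2]

lemma sum_count_eq_length (l : List X) : ∑ i, l.count i = l.length := by
  simpa using Multiset.sum_count_eq_card (s := Finset.univ) (m := (l : Multiset X)) (by simp)

end Counts

section Types
variable {β : Type*} [Fintype β] [DecidableEq β]

noncomputable def pathWeight (Q : β → β → ℝ) (l : List β) : ℝ :=
  ((l.zip l.tail).map fun p => Q p.1 p.2).prod

omit [Fintype β] [DecidableEq β] in
lemma pathWeight_cons_cons (Q : β → β → ℝ) (a b : β) (l : List β) :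
    pathWeight Q (a :: b :: l) = Q a b * pathWeight Q (b :: l) := by
  simp [pathWeight]

omit [Fintype β] [DecidableEq β] in
lemma pathWeight_nonneg {Q : β → β → ℝ} (hQ : ∀ i j, 0 ≤ Q i j) (l : List β) :
    0 ≤ pathWeight Q l :=
  List.prod_nonneg fun _ hx => by
    obtain ⟨p, -, rfl⟩ := List.mem_map.mp hx
    exact hQ _ _

omit [DecidableEq β] in
lemma sum_pathWeight_cons_ofFn {Q : β → β → ℝ} (hQ : IsStochasticMat Q) (a : β) (m : ℕ) :
    ∑ z : Fin m → β, pathWeight Q (a :: List.ofFn z) = 1 := by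
  induction m generalizing a with
  | zero => simp [pathWeight]
  | succ m ih =>
    rw [← (Fin.consEquiv fun _ => β).sum_comp, Fintype.sum_prod_type]
    simp [List.ofFn_succ, pathWeight_cons_cons, ← Finset.mul_sum, ih, hQ.2]

omit [DecidableEq β] in
lemma sum_pathWeight_ofFn_le_card [Nonempty β] {Q : β → β → ℝ} (hQ : IsStochasticMat Q)
    (m : ℕ) : ∑ z : Fin m → β, pathWeight Q (List.ofFn z) ≤ Fintype.card β := by
  cases m with
  | zero => simp [pathWeight, Nat.one_le_iff_ne_zero]
  | succ m =>
    rw [← (Fin.consEquiv fun _ => β).sum_comp, Fintype.sum_prod_type]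
    simp [List.ofFn_succ, sum_pathWeight_cons_ofFn hQ]

lemma pathWeight_eq_prod_pow_pairCount (Q : β → β → ℝ) (l : List β) :
    pathWeight Q l = ∏ i, ∏ j, Q i j ^ pairCount l i j := by
  rw [← Fintype.prod_prod_type' fun i j => Q i j ^ pairCount l i j, pathWeight,
    Finset.prod_list_map_count]
  -- `Finset.prod_list_map_count` counts with `instBEqOfDecidableEq`, `pairCount` with
  -- `instBEqProd`; `congr!` identifies the two lawful instances.
  refine (Finset.prod_subset (Finset.subset_univ _) fun p _ hp => ?_).trans
    (Finset.prod_congr rfl fun p _ => ?_)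
  · rw [@List.count_eq_zero_of_not_mem _ instBEqOfDecidableEq _ _ _ (by simpa using hp), pow_zero]
  · simp only [pairCount, Prod.mk.eta]
    congr!

/-- Rows of states that `l` never leaves are uniform, so that the matrix is stochastic. -/
noncomputable def empiricalMat (l : List β) (i j : β) : ℝ :=
  if stateCount l i = 0 then (Fintype.card β : ℝ)⁻¹ else pairCount l i j / stateCount l i

lemma isStochasticMat_empiricalMat [Nonempty β] (l : List β) :
    IsStochasticMat (empiricalMat l) := by
  refine ⟨fun i j => by unfold empiricalMat; split_ifs <;> positivity, fun i => ?_⟩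
  unfold empiricalMat
  split_ifs with h
  · simp
  · rw [← Finset.sum_div, div_eq_one_iff_eq (by exact_mod_cast h)]
    exact_mod_cast rfl

noncomputable def empiricalEntropy (l : List β) : ℝ :=
  ∑ i, ∑ j, (stateCount l i : ℝ) * negMulLogb (pairCount l i j / stateCount l i)

lemma pathWeight_empiricalMat {l l' : List β} (h : ∀ i j, pairCount l' i j = pairCount l i j) :
    pathWeight (empiricalMat l) l' = 2 ^ (-empiricalEntropy l) := by
  simp only [pathWeight_eq_prod_pow_pairCount, h, empiricalEntropy, ← Finset.sum_neg_distrib,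
    Real.rpow_sum_of_pos two_pos]
  refine Finset.prod_congr rfl fun i _ => Finset.prod_congr rfl fun j _ => ?_
  rcases Nat.eq_zero_or_pos (pairCount l i j) with h0 | hpos
  · simp [h0]
  · have hs : stateCount l i ≠ 0 := (hpos.trans_le (pairCount_le_stateCount l i j)).ne'
    have hr : (0 : ℝ) < pairCount l i j / stateCount l i := by positivity
    rw [empiricalMat, if_neg hs, negMulLogb, mul_neg, neg_neg, ← mul_assoc,
      mul_div_cancel₀ _ (by exact_mod_cast hs), mul_comm, Real.rpow_mul zero_le_two,
      Real.rpow_logb two_pos one_lt_two.ne' hr, Real.rpow_natCast]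

lemma card_pairCount_eq_le [Nonempty β] (m : ℕ) (l : List β) :
    (#{z : Fin m → β | ∀ i j, pairCount (List.ofFn z) i j = pairCount l i j} : ℝ) ≤
      Fintype.card β * 2 ^ empiricalEntropy l := by
  set C : Finset (Fin m → β) := {z | ∀ i j, pairCount (List.ofFn z) i j = pairCount l i j}
  have hweight : (#C : ℝ) * 2 ^ (-empiricalEntropy l) ≤ Fintype.card β := by
    calc (#C : ℝ) * 2 ^ (-empiricalEntropy l)
        = ∑ z ∈ C, pathWeight (empiricalMat l) (List.ofFn z) := by
          rw [Finset.sum_congr rfl fun z hz => pathWeight_empiricalMat (Finset.mem_filter.mp hz).2,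
            Finset.sum_const, nsmul_eq_mul]
      _ ≤ ∑ z, pathWeight (empiricalMat l) (List.ofFn z) :=
          Finset.sum_le_sum_of_subset_of_nonneg (Finset.subset_univ _) fun z _ _ =>
            pathWeight_nonneg (isStochasticMat_empiricalMat l).1 _
      _ ≤ Fintype.card β := sum_pathWeight_ofFn_le_card (isStochasticMat_empiricalMat l) m
  rwa [Real.rpow_neg zero_le_two, ← div_eq_mul_inv, div_le_iff₀ (by positivity)] at hweight

lemma card_image_pairCount_le (m : ℕ) (s : Finset (Fin m → β)) :
    #(s.image fun z => pairCount (List.ofFn z)) ≤ (m + 1) ^ (Fintype.card β ^ 2) := by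
  calc #(s.image fun z => pairCount (List.ofFn z))
      ≤ #(Fintype.piFinset fun _ : β => Fintype.piFinset fun _ : β => Finset.range (m + 1)) := by
        refine Finset.card_le_card fun N hN => ?_
        obtain ⟨z, -, rfl⟩ := Finset.mem_image.mp hN
        simp only [Fintype.mem_piFinset, Finset.mem_range, Nat.lt_succ_iff]
        exact fun i j => (pairCount_le_length _ i j).trans (List.length_ofFn).le
    _ = (m + 1) ^ (Fintype.card β ^ 2) := by simp [sq, pow_mul]

end Types

universe u

lemma exists_empiricalEntropy_le_of_SMTypical {δ : ℝ} (hδ : 0 < δ) :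
    ∃ ε₀ > 0, ∀ ε < ε₀, ∀ (β : Type u) [Fintype β] [DecidableEq β] (Q : β → β → ℝ)
      (q : β → ℝ), (∀ i, q i ∈ Set.Icc (0 : ℝ) 1) → ∀ l : List β, SMTypical Q q ε l →
        empiricalEntropy l ≤ l.length * (mcCondEnt Q q + Fintype.card β ^ 2 * δ) := by
  obtain ⟨ε₀, hε₀, hcont⟩ := exists_mul_negMulLogb_le hδ
  refine ⟨ε₀, hε₀, fun ε hε β _ _ Q q hq l hl => ?_⟩
  calc empiricalEntropy l
      ≤ ∑ i, ∑ j, (l.length : ℝ) * (q i * negMulLogb (Q i j) + δ) :=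
        Finset.sum_le_sum fun i _ => Finset.sum_le_sum fun j _ =>
          hcont ε hε _ _ _ _ _ (Nat.cast_nonneg _) (div_stateCount_mem_Icc l i j) (hq i)
            (abs_stateCount_sub_le_of_SMTypical hl i) (hl i j).1
    _ = l.length * (mcCondEnt Q q + Fintype.card β ^ 2 * δ) := by
        simp only [mcCondEnt_eq_sum_negMulLogb, mul_add, Finset.sum_add_distrib, ← Finset.mul_sum,
          Finset.sum_const, Finset.card_univ, nsmul_eq_mul]
        ring

lemma exists_card_SMTypical_le {δ : ℝ} (hδ : 0 < δ) :
    ∃ ε₀ > 0, ∀ ε < ε₀, ∀ (β : Type u) [Fintype β] [DecidableEq β] [Nonempty β]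
      (Q : β → β → ℝ) (q : β → ℝ), (∀ i, q i ∈ Set.Icc (0 : ℝ) 1) → ∀ m : ℕ,
        (#{z : Fin m → β | SMTypical Q q ε (List.ofFn z)} : ℝ) ≤
          Fintype.card β * (m + 1) ^ (Fintype.card β ^ 2) *
            2 ^ (m * (mcCondEnt Q q + Fintype.card β ^ 2 * δ)) := by
  obtain ⟨ε₀, hε₀, hent⟩ := exists_empiricalEntropy_le_of_SMTypical.{u} hδ
  refine ⟨ε₀, hε₀, fun ε hε β _ _ _ Q q hq m => ?_⟩
  set T : Finset (Fin m → β) := {z | SMTypical Q q ε (List.ofFn z)}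
  set bound : ℝ := Fintype.card β * 2 ^ (m * (mcCondEnt Q q + Fintype.card β ^ 2 * δ))
  have hfiber : ∀ N ∈ T.image fun z => pairCount (List.ofFn z),
      (#{z ∈ T | pairCount (List.ofFn z) = N} : ℝ) ≤ bound := by
    intro N hN
    obtain ⟨z₀, hz₀, rfl⟩ := Finset.mem_image.mp hN
    have hE := hent ε hε β Q q hq _ (Finset.mem_filter.mp hz₀).2
    rw [List.length_ofFn] at hE
    calc (#{z ∈ T | pairCount (List.ofFn z) = pairCount (List.ofFn z₀)} : ℝ)
        ≤ #{z : Fin m → β |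
            ∀ i j, pairCount (List.ofFn z) i j = pairCount (List.ofFn z₀) i j} := by
          refine Nat.cast_le.mpr (Finset.card_le_card fun z hz => ?_)
          simp only [Finset.mem_filter] at hz ⊢
          exact ⟨Finset.mem_univ _, fun i j => by rw [hz.2]⟩
      _ ≤ Fintype.card β * 2 ^ empiricalEntropy (List.ofFn z₀) := card_pairCount_eq_le m _
      _ ≤ bound := mul_le_mul_of_nonneg_left (Real.rpow_le_rpow_of_exponent_le one_le_two hE)
          (Nat.cast_nonneg _)
  calc (#T : ℝ) = ∑ N ∈ T.image fun z => pairCount (List.ofFn z),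
        (#{z ∈ T | pairCount (List.ofFn z) = N} : ℝ) := by
        exact_mod_cast Finset.card_eq_sum_card_image _ T
    _ ≤ #(T.image fun z => pairCount (List.ofFn z)) * bound := by
        simpa using Finset.sum_le_card_nsmul _ _ _ hfiber
    _ ≤ (m + 1) ^ (Fintype.card β ^ 2) * bound := by
        gcongr
        exact_mod_cast card_image_pairCount_le m T
    _ = _ := by ring

lemma List.forall₂_ofFn {α β : Type*} {R : α → β → Prop} {n : ℕ} {f : Fin n → α} {g : Fin n → β}
    (h : ∀ i, R (f i) (g i)) : List.Forall₂ R (List.ofFn f) (List.ofFn g) :=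
  List.forall₂_iff_get.mpr ⟨by simp, fun i h₁ _ => by simpa using h ⟨i, by simpa using h₁⟩⟩

lemma List.exists_ofFn_eq {α : Type*} (l : List α) {n : ℕ} (h : l.length = n) :
    ∃ f : Fin n → α, List.ofFn f = l := by
  subst h
  exact ⟨l.get, List.ofFn_get l⟩

section Subsequences
variable {X : Type*} [DecidableEq X]

@[simp] lemma subListIn_nil (A : Finset X) : subListIn [] A = [] := rfl

@[simp] lemma subListIn_cons_of_mem {a : X} (l : List X) {A : Finset X} (h : a ∈ A) :
    subListIn (a :: l) A = ⟨a, h⟩ :: subListIn l A := by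
  simp [subListIn, h]

@[simp] lemma subListIn_cons_of_not_mem {a : X} (l : List X) {A : Finset X} (h : a ∉ A) :
    subListIn (a :: l) A = subListIn l A := by
  simp [subListIn, h]

lemma length_subListIn (l : List X) (A : Finset X) :
    (subListIn l A).length = ∑ i ∈ A, l.count i := by
  induction l with
  | nil => simp
  | cons a l ih =>
    by_cases h : a ∈ A <;> simp [List.count_cons, Finset.sum_add_distrib, h, ih]

lemma length_subListIn_eq_of_forall₂ {A : Finset X} {u v : List X}
    (h : List.Forall₂ (fun a b => a ∈ A ↔ b ∈ A) u v) :
    (subListIn u A).length = (subListIn v A).length := by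
  induction h with
  | nil => rfl
  | @cons a b u v hab _ ih =>
    by_cases ha : a ∈ A
    · simp [ha, hab.mp ha, ih]
    · simp [ha, mt hab.mpr ha, ih]

lemma eq_of_forall_subListIn_eq {𝒜 : Finset (Finset X)} (hcover : ∀ a, ∃ A ∈ 𝒜, a ∈ A)
    {u v : List X} (h : List.Forall₂ (fun a b => ∀ A ∈ 𝒜, a ∈ A ↔ b ∈ A) u v)
    (hsub : ∀ A ∈ 𝒜, subListIn u A = subListIn v A) : u = v := by
  induction h with
  | nil => rfl
  | @cons a b u v hab _ ih =>
    obtain ⟨A, hA, ha⟩ := hcover a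
    have hhead := hsub A hA
    simp only [subListIn_cons_of_mem _ ha, subListIn_cons_of_mem _ ((hab A hA).mp ha),
      List.cons.injEq, Subtype.mk.injEq] at hhead
    obtain rfl := hhead.1
    refine congrArg _ (ih fun B hB => ?_)
    have htail := hsub B hB
    by_cases haB : a ∈ B <;> simpa [haB] using htail

lemma count_subListIn {A : Finset X} {i : X} (hi : i ∈ A) (l : List X) :
    (subListIn l A).count ⟨i, hi⟩ = l.count i := by
  induction l with
  | nil => simp
  | cons a l ih =>
    by_cases ha : a ∈ A
    · simp [ha, List.count_cons, ih]
    · have : a ≠ i := fun h => ha (h ▸ hi)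
      simp [ha, ih, this]

end Subsequences

section Cosets
variable {K : Type*} [Ring K] [Fintype K] (I : Ideal K)

noncomputable def cosetOf (a : K) : Finset K := Finset.univ.filter fun y => y - a ∈ I

@[simp] lemma mem_cosetOf {a y : K} :
    y ∈ cosetOf I a ↔ (Submodule.Quotient.mk y : K ⧸ I) = Submodule.Quotient.mk a := by
  simp [cosetOf, Submodule.Quotient.eq]

lemma cosetOf_mem_cosetsOf (a : K) : cosetOf I a ∈ cosetsOf I :=
  Finset.mem_image_of_mem _ (Finset.mem_univ a)

lemma nonempty_of_mem_cosetsOf {A : Finset K} (hA : A ∈ cosetsOf I) : A.Nonempty := by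
  obtain ⟨a, -, rfl⟩ := Finset.mem_image.mp hA
  exact ⟨a, (mem_cosetOf I).mpr rfl⟩

lemma mem_iff_mem_of_sub_mem {A : Finset K} (hA : A ∈ cosetsOf I) {a b : K} (h : a - b ∈ I) :
    a ∈ A ↔ b ∈ A := by
  obtain ⟨c, -, rfl⟩ := Finset.mem_image.mp hA
  change a ∈ cosetOf I c ↔ b ∈ cosetOf I c
  rw [mem_cosetOf, mem_cosetOf, (Submodule.Quotient.eq I).mpr h]

lemma cosetOf_eq_filter (a : K) :
    cosetOf I a = Finset.univ.filter fun y => cosetOf I y = cosetOf I a := by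
  ext y
  simp only [Finset.mem_filter, Finset.mem_univ, true_and, Finset.ext_iff, mem_cosetOf]
  exact ⟨fun hy z => by rw [hy], fun hy => (hy y).mp rfl⟩

lemma card_cosetsOf_le : #(cosetsOf I) ≤ Fintype.card K :=
  Finset.card_image_le

lemma sum_cosetsOf_sum {M : Type*} [AddCommMonoid M] (f : K → M) :
    ∑ A ∈ cosetsOf I, ∑ i ∈ A, f i = ∑ i, f i := by
  rw [← Finset.sum_fiberwise_of_maps_to (fun i _ => cosetOf_mem_cosetsOf I i) f]
  refine Finset.sum_congr rfl fun A hA => ?_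
  obtain ⟨a, -, rfl⟩ := Finset.mem_image.mp hA
  exact congrArg (∑ i ∈ ·, f i) (cosetOf_eq_filter I a)

end Cosets

section Supremus
variable {X : Type*}

/-- `π_A`, the invariant distribution of the stochastic complement `S_A`. -/
noncomputable def restrictDist (π : X → ℝ) (A : Finset X) (i : A) : ℝ := π i / ∑ j ∈ A, π j

lemma restrictDist_mem_Icc {π : X → ℝ} (hπ : ∀ i, 0 ≤ π i) (A : Finset X) (i : A) :
    restrictDist π A i ∈ Set.Icc (0 : ℝ) 1 :=
  ⟨div_nonneg (hπ i) (Finset.sum_nonneg fun j _ => hπ j),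
    div_le_one_of_le₀ (Finset.single_le_sum (fun j _ => hπ j) i.2)
      (Finset.sum_nonneg fun j _ => hπ j)⟩

lemma abs_count_sub_le_of_supTypical [Fintype X] [DecidableEq X] {P : X → X → ℝ} {π : X → ℝ}
    {ε : ℝ} (hπ : ∑ i, π i = 1) {l : List X} (hl : SupTypical P π ε l) (i : X) :
    |(l.count i : ℝ) - l.length * π i| ≤ l.length * ε + 1 := by
  have h := abs_count_sub_le_of_SMTypical (hl Finset.univ ⟨i, Finset.mem_univ i⟩)
    ⟨i, Finset.mem_univ i⟩
  rw [length_subListIn, sum_count_eq_length, hπ, div_one] at h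
  convert h using 4
  -- `count_subListIn` counts with `Subtype.instBEq`, `h` with `instBEqOfDecidableEq`.
  rw [← count_subListIn (Finset.mem_univ i)]
  congr!

end Supremus

section SupremusCosets
variable {K : Type*} [Ring K] [Fintype K] [DecidableEq K]

lemma card_supTypical_le_prod (P : K → K → ℝ) (π : K → ℝ) (ε : ℝ) {n : ℕ} (x : Fin n → K)
    (I : Ideal K) :
    Nat.card {y : Fin n → K // SupTypical P π ε (List.ofFn y) ∧ ∀ l : Fin n, y l - x l ∈ I} ≤
      ∏ A ∈ cosetsOf I, #{z : Fin (subListIn (List.ofFn x) A).length → A |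
        SMTypical (stochComp P A) (restrictDist π A) ε (List.ofFn z)} := by
  rw [Nat.card_eq_fintype_card, Fintype.card_subtype]
  set S : Finset (Fin n → K) := {y | SupTypical P π ε (List.ofFn y) ∧ ∀ l, y l - x l ∈ I}
  set G : ∀ A : Finset K, Finset (List A) := fun A =>
    Finset.image List.ofFn {z : Fin (subListIn (List.ofFn x) A).length → A |
      SMTypical (stochComp P A) (restrictDist π A) ε (List.ofFn z)}
  have hmaps : Set.MapsTo (fun y A _ => subListIn (List.ofFn y) A) (S : Set (Fin n → K))
      ((cosetsOf I).pi G : Set (∀ A ∈ cosetsOf I, List A)) := by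
    intro y hy
    simp only [S, Finset.coe_filter, Finset.mem_univ, true_and, Set.mem_ofPred_eq] at hy
    refine Finset.mem_pi.mpr fun A hA => ?_
    have hlen := length_subListIn_eq_of_forall₂ (A := A)
      (List.forall₂_ofFn fun l => mem_iff_mem_of_sub_mem I hA (hy.2 l))
    obtain ⟨z, hz⟩ := List.exists_ofFn_eq _ hlen
    refine Finset.mem_image.mpr ⟨z, Finset.mem_filter.mpr ⟨Finset.mem_univ _, ?_⟩, hz⟩
    exact hz ▸ hy.1 A (nonempty_of_mem_cosetsOf I hA)
  have hinj : Set.InjOn (fun y A (_ : A ∈ cosetsOf I) => subListIn (List.ofFn y) A)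
      (S : Set (Fin n → K)) := by
    intro y₁ hy₁ y₂ hy₂ h
    simp only [S, Finset.coe_filter, Finset.mem_univ, true_and, Set.mem_ofPred_eq] at hy₁ hy₂
    refine List.ofFn_injective (eq_of_forall_subListIn_eq (𝒜 := cosetsOf I)
      (fun a => ⟨cosetOf I a, cosetOf_mem_cosetsOf I a, (mem_cosetOf I).mpr rfl⟩)
      (List.forall₂_ofFn fun l A hA => mem_iff_mem_of_sub_mem I hA ?_)
      fun A hA => congrFun (congrFun h A) hA)
    simpa using I.sub_mem (hy₁.2 l) (hy₂.2 l)
  calc _ ≤ #((cosetsOf I).pi G) := Finset.card_le_card_of_injOn _ hmaps hinj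
    _ = ∏ A ∈ cosetsOf I, #(G A) := Finset.card_pi _ _
    _ ≤ _ := Finset.prod_le_prod' fun A _ => Finset.card_image_le

lemma abs_length_subListIn_sub_le {P : K → K → ℝ} {π : K → ℝ} {ε : ℝ} (hπ : ∑ i, π i = 1)
    {l : List K} (hl : SupTypical P π ε l) (A : Finset K) :
    |((subListIn l A).length : ℝ) - l.length * ∑ i ∈ A, π i| ≤
      Fintype.card K * (l.length * ε + 1) := by
  have hpos : 0 ≤ (l.length : ℝ) * ε + 1 :=
    (abs_nonneg _).trans (abs_count_sub_le_of_supTypical hπ hl 0)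
  rw [length_subListIn, Nat.cast_sum, Finset.mul_sum, ← Finset.sum_sub_distrib]
  calc _ ≤ ∑ _i ∈ A, ((l.length : ℝ) * ε + 1) :=
        (Finset.abs_sum_le_sum_abs _ _).trans
          (Finset.sum_le_sum fun i _ => abs_count_sub_le_of_supTypical hπ hl i)
    _ = #A * ((l.length : ℝ) * ε + 1) := by rw [Finset.sum_const, nsmul_eq_mul]
    _ ≤ Fintype.card K * (l.length * ε + 1) := by
        gcongr
        exact_mod_cast Finset.card_le_univ A

lemma sum_length_mul_scCondEnt_add_le {M : ℝ}
    (hM : ∀ t ∈ Set.Icc (-1 : ℝ) 2, |negMulLogb t| ≤ M) {P : K → K → ℝ} {π : K → ℝ} {ε : ℝ}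
    (hπ₀ : ∀ i, 0 ≤ π i) (hπ₁ : ∑ i, π i = 1) (hε : ε ≤ 1) {l : List K}
    (hl : SupTypical P π ε l) (I : Ideal K) (δ : ℝ) :
    ∑ A ∈ cosetsOf I, (subListIn l A).length * (scCondEnt P π A + δ) ≤
      l.length * (ringHS P π I + δ) + Fintype.card K ^ 4 * M * (l.length * ε + 1) := by
  set c := Fintype.card K
  set err : ℝ := c ^ 3 * M * (l.length * ε + 1)
  have hM0 : 0 ≤ M := (abs_nonneg _).trans (hM 0 ⟨by norm_num, by norm_num⟩)
  have herr : 0 ≤ err := by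
    have := (abs_nonneg _).trans (abs_count_sub_le_of_supTypical hπ₁ hl 0)
    positivity
  have hterm : ∀ A ∈ cosetsOf I, (subListIn l A).length * scCondEnt P π A ≤
      l.length * ((∑ j ∈ A, π j) * scCondEnt P π A) + err := by
    intro A hA
    have hH : |scCondEnt P π A| ≤ c ^ 2 * M := by
      refine (abs_mcCondEnt_le (restrictDist_mem_Icc hπ₀ A) fun i j =>
        hM _ ((hl A (nonempty_of_mem_cosetsOf I hA)).mem_Icc hε i j)).trans ?_
      have : Fintype.card A ≤ c := by simpa using Finset.card_le_univ A
      gcongr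
    have hm := abs_length_subListIn_sub_le hπ₁ hl A
    calc ((subListIn l A).length : ℝ) * scCondEnt P π A
        = l.length * ((∑ j ∈ A, π j) * scCondEnt P π A) +
          ((subListIn l A).length - l.length * ∑ j ∈ A, π j) * scCondEnt P π A := by ring
      _ ≤ l.length * ((∑ j ∈ A, π j) * scCondEnt P π A) + c * (l.length * ε + 1) * (c ^ 2 * M) := by
          exact add_le_add le_rfl ((le_abs_self _).trans ((abs_mul _ _).trans_le
            (mul_le_mul hm hH (abs_nonneg _) ((abs_nonneg _).trans hm))))
      _ = l.length * ((∑ j ∈ A, π j) * scCondEnt P π A) + err := by ring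
  have hlen : ∑ A ∈ cosetsOf I, ((subListIn l A).length : ℝ) = l.length := by
    simp only [length_subListIn, Nat.cast_sum]
    rw [sum_cosetsOf_sum, ← Nat.cast_sum, sum_count_eq_length]
  calc ∑ A ∈ cosetsOf I, ((subListIn l A).length : ℝ) * (scCondEnt P π A + δ)
      = ∑ A ∈ cosetsOf I, ((subListIn l A).length : ℝ) * scCondEnt P π A + l.length * δ := by
        rw [← hlen, Finset.sum_mul, ← Finset.sum_add_distrib]
        simp only [mul_add]
    _ ≤ ∑ A ∈ cosetsOf I, (l.length * ((∑ j ∈ A, π j) * scCondEnt P π A) + err) + l.length * δ := by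
        gcongr with A hA
        exact hterm A hA
    _ = l.length * ringHS P π I + #(cosetsOf I) * err + l.length * δ := by
        rw [Finset.sum_add_distrib, ← Finset.mul_sum, Finset.sum_const, nsmul_eq_mul, ringHS]
    _ ≤ l.length * ringHS P π I + c * err + l.length * δ := by
        gcongr
        exact_mod_cast card_cosetsOf_le I
    _ = l.length * (ringHS P π I + δ) + c ^ 4 * M * (l.length * ε + 1) := by ring

end SupremusCosets

lemma exists_card_supTypical_le {K : Type u} [Ring K] [Fintype K] [DecidableEq K] {δ : ℝ}
    (hδ : 0 < δ) :
    ∃ ε₀ > 0, ∀ ε < ε₀, ∀ (P : K → K → ℝ) (π : K → ℝ), (∀ i, 0 ≤ π i) →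
      ∀ {n : ℕ} (x : Fin n → K) (I : Ideal K),
        (Nat.card {y : Fin n → K // SupTypical P π ε (List.ofFn y) ∧
            ∀ l : Fin n, y l - x l ∈ I} : ℝ) ≤
          (Fintype.card K * ((n : ℝ) + 1) ^ (Fintype.card K ^ 2)) ^ Fintype.card K *
            2 ^ ∑ A ∈ cosetsOf I, (subListIn (List.ofFn x) A).length * (scCondEnt P π A + δ) := by
  set c := Fintype.card K
  have hc : 1 ≤ c := Fintype.card_pos
  obtain ⟨ε₀, hε₀, hcount⟩ := exists_card_SMTypical_le.{u} (δ := δ / c ^ 2) (by positivity)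
  refine ⟨ε₀, hε₀, fun ε hε P π hπ n x I => ?_⟩
  have hcoset : ∀ A ∈ cosetsOf I,
      (#{z : Fin (subListIn (List.ofFn x) A).length → A |
        SMTypical (stochComp P A) (restrictDist π A) ε (List.ofFn z)} : ℝ) ≤
      c * ((n : ℝ) + 1) ^ (c ^ 2) *
        2 ^ ((subListIn (List.ofFn x) A).length * (scCondEnt P π A + δ)) := by
    intro A hA
    have : Nonempty A := (nonempty_of_mem_cosetsOf I hA).to_subtype
    have hcA : Fintype.card A ≤ c := by simpa using Finset.card_le_univ A
    have hm : (subListIn (List.ofFn x) A).length ≤ n :=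
      (List.length_filterMap_le _ _).trans (List.length_ofFn).le
    have hδA : (Fintype.card A : ℝ) ^ 2 * (δ / c ^ 2) ≤ δ := by
      rw [mul_div_assoc', div_le_iff₀ (by positivity), mul_comm δ]
      gcongr
    refine (hcount ε hε A (stochComp P A) (restrictDist π A) (restrictDist_mem_Icc hπ A) _).trans ?_
    gcongr
    · calc ((subListIn (List.ofFn x) A).length + 1 : ℝ) ^ Fintype.card A ^ 2
          ≤ ((n : ℝ) + 1) ^ Fintype.card A ^ 2 := by gcongr
        _ ≤ ((n : ℝ) + 1) ^ c ^ 2 :=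
          pow_le_pow_right₀ (le_add_of_nonneg_left (Nat.cast_nonneg _)) (by gcongr)
    · exact one_le_two
    · exact le_rfl
  calc _ ≤ ∏ A ∈ cosetsOf I, (#{z : Fin (subListIn (List.ofFn x) A).length → A |
          SMTypical (stochComp P A) (restrictDist π A) ε (List.ofFn z)} : ℝ) := by
        exact_mod_cast card_supTypical_le_prod P π ε x I
    _ ≤ ∏ A ∈ cosetsOf I, (c * ((n : ℝ) + 1) ^ (c ^ 2) *
          2 ^ ((subListIn (List.ofFn x) A).length * (scCondEnt P π A + δ))) :=
        Finset.prod_le_prod (fun _ _ => by positivity) hcoset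
    _ = (c * ((n : ℝ) + 1) ^ (c ^ 2)) ^ #(cosetsOf I) *
          2 ^ ∑ A ∈ cosetsOf I, (subListIn (List.ofFn x) A).length * (scCondEnt P π A + δ) := by
        rw [Finset.prod_mul_distrib, Finset.prod_const, Real.rpow_sum_of_pos two_pos]
    _ ≤ _ := by
        gcongr
        · exact one_le_mul_of_one_le_of_one_le (by exact_mod_cast hc)
            (one_le_pow₀ (le_add_of_nonneg_left (Nat.cast_nonneg _)))
        · exact card_cosetsOf_le I

lemma eventually_mul_pow_le_two_rpow (B : ℝ) (k : ℕ) {a : ℝ} (ha : 0 < a) :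
    ∀ᶠ n : ℕ in Filter.atTop, B * ((n : ℝ) + 1) ^ k ≤ 2 ^ (n * a) := by
  set r : ℝ := 2 ^ a
  have hr : 1 < r := Real.one_lt_rpow one_lt_two ha
  have hlim : Filter.Tendsto (fun n : ℕ => |B| * r * (((n : ℝ) + 1) ^ k / r ^ (n + 1)))
      Filter.atTop (nhds 0) := by
    simpa using ((tendsto_pow_const_div_const_pow_of_one_lt k hr).comp
      (Filter.tendsto_add_atTop_nat 1)).const_mul (|B| * r)
  filter_upwards [hlim.eventually_le_const one_pos] with n hn
  have hrn : 0 < r ^ n := by positivity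
  rw [mul_comm (n : ℝ), Real.rpow_mul_natCast zero_le_two]
  calc B * ((n : ℝ) + 1) ^ k ≤ |B| * ((n : ℝ) + 1) ^ k := by gcongr; exact le_abs_self B
    _ = |B| * r * (((n : ℝ) + 1) ^ k / r ^ (n + 1)) * r ^ n := by
        field_simp
        ring
    _ ≤ r ^ n := mul_le_of_le_one_left hrn.le hn

theorem stmt6_general {K : Type*} [Ring K] [Fintype K] [DecidableEq K]
    (P : K → K → ℝ) (π : K → ℝ)
    (hπ : IsInvariantDist P π) :
    ∀ η > (0 : ℝ), ∃ ε₀ > (0 : ℝ), ∃ N₀ : ℕ+, ∀ ε : ℝ, 0 < ε → ε < ε₀ →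
      ∀ n : ℕ, (N₀ : ℕ) < n →
      ∀ x : Fin n → K, SupTypical P π ε (List.ofFn x) →
      ∀ I : Ideal K,
        (Nat.card {y : Fin n → K // SupTypical P π ε (List.ofFn y) ∧
            ∀ l : Fin n, y l - x l ∈ I} : ℝ) <
          (2 : ℝ) ^ ((n : ℝ) * (ringHS P π I + η)) := by
  intro η hη
  obtain ⟨M, hM0, hM⟩ := exists_abs_negMulLogb_le
  set c := Fintype.card K
  set C : ℝ := c ^ 4 * M
  obtain ⟨ε₁, hε₁, hcard⟩ := exists_card_supTypical_le (K := K) (δ := η / 4) (by positivity)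
  obtain ⟨N, hN⟩ := Filter.eventually_atTop.mp
    (eventually_mul_pow_le_two_rpow ((c : ℝ) ^ c * 2 ^ C) (c ^ 2 * c) (a := η / 4) (by positivity))
  refine ⟨min (min ε₁ 1) (η / (4 * (C + 1))), by positivity, ⟨N + 1, N.succ_pos⟩,
    fun ε hε hεε₀ n hn x hx I => ?_⟩
  simp only [lt_min_iff] at hεε₀
  have hn0 : (0 : ℝ) < n := by exact_mod_cast N.succ_pos.trans hn
  have hexp := sum_length_mul_scCondEnt_add_le hM hπ.1 hπ.2.1 hεε₀.1.2.le hx I (η / 4)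
  rw [List.length_ofFn] at hexp
  have hCε : C * ε ≤ η / 4 := by
    rw [lt_div_iff₀ (by positivity)] at hεε₀
    nlinarith [hεε₀.2]
  calc _ ≤ (c * ((n : ℝ) + 1) ^ (c ^ 2)) ^ c *
        2 ^ ∑ A ∈ cosetsOf I, (subListIn (List.ofFn x) A).length * (scCondEnt P π A + η / 4) :=
        hcard ε hεε₀.1.1 P π hπ.1 x I
    _ ≤ (c * ((n : ℝ) + 1) ^ (c ^ 2)) ^ c * 2 ^ (C + n * (ringHS P π I + η / 2)) := by
        gcongr
        · exact one_le_two
        · nlinarith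
    _ = (c : ℝ) ^ c * 2 ^ C * ((n : ℝ) + 1) ^ (c ^ 2 * c) * 2 ^ (n * (ringHS P π I + η / 2)) := by
        rw [Real.rpow_add two_pos, mul_pow, ← pow_mul]
        ring
    _ ≤ 2 ^ (n * (η / 4)) * 2 ^ (n * (ringHS P π I + η / 2)) := by
        gcongr
        exact hN n (by change N + 1 < n at hn; omega)
    _ < 2 ^ (n * (ringHS P π I + η)) := by
        rw [← Real.rpow_add two_pos]
        exact Real.rpow_lt_rpow_of_exponent_lt one_lt_two (by nlinarith)

/-- Typicality lemma: for a Supremus typical `x` and a left ideal `I`, the number of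
Supremus typical `y` with `y - x ∈ Iⁿ` is less than `2^{n(H(S_{K/I}|π)+η)}`. -/
theorem stmt6 {K : Type*} [Ring K] [Fintype K] [DecidableEq K]
    (P : K → K → ℝ) (π : K → ℝ)
    (hP : IsStochasticMat P) (hirr : IsIrreducibleMat P) (hπ : IsInvariantDist P π) :
    ∀ η > (0 : ℝ), ∃ ε₀ > (0 : ℝ), ∃ N₀ : ℕ+, ∀ ε : ℝ, 0 < ε → ε < ε₀ →
      ∀ n : ℕ, (N₀ : ℕ) < n →
      ∀ x : Fin n → K, SupTypical P π ε (List.ofFn x) →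
      ∀ I : Ideal K,
        (Nat.card {y : Fin n → K // SupTypical P π ε (List.ofFn y) ∧
            ∀ l : Fin n, y l - x l ∈ I} : ℝ) <
          (2 : ℝ) ^ ((n : ℝ) * (ringHS P π I + η)) :=
  stmt6_general P π hπ
end

section
/- Let (X^(n)) be a (not necessarily finite-state) homogeneous Markov chain with countable state space 𝒳 and transition matrix P₀. If P₀ = c₁U + (1−c₁)·1, where U is a matrix all of whose rows are identical to some countably-indexed unitary vector [u_x]_{x∈𝒳}, 0 ≤ c₁ ≤ 1, and 1 is the identity matrix, then for every function Γ defined on 𝒳 the process (Γ(X^(n))) is a Markov chain. -/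
open scoped Classical

/-- Probability that the (countable-state, homogeneous) Markov chain with initial
distribution `μ` and transition matrix `P` emits the path `x` of length `m+1`. -/
noncomputable def ctPathProb {X : Type*} (μ : X → ℝ) (P : X → X → ℝ) {m : ℕ}
    (x : Fin (m + 1) → X) : ℝ :=
  μ (x 0) * ∏ l : Fin m, P (x l.castSucc) (x l.succ)

/-- `Pr{Γ(X^{(1)}) = y^{(1)}, …, Γ(X^{(m+1)}) = y^{(m+1)}}`. -/
noncomputable def yPathProb {X 𝒴 : Type*} [Countable X] (μ : X → ℝ) (P : X → X → ℝ)
    (Γ : X → 𝒴) (m : ℕ) (y : Fin (m + 1) → 𝒴) : ℝ :=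
  ∑' x : Fin (m + 1) → X, if ∀ l, Γ (x l) = y l then ctPathProb μ P x else 0

/-- `Pr{Γ(X^{(m+1)}) = a}`. -/
noncomputable def yMargin1 {X 𝒴 : Type*} [Countable X] (μ : X → ℝ) (P : X → X → ℝ)
    (Γ : X → 𝒴) (m : ℕ) (a : 𝒴) : ℝ :=
  ∑' x : Fin (m + 1) → X, if Γ (x (Fin.last m)) = a then ctPathProb μ P x else 0

/-- `Pr{Γ(X^{(m+1)}) = a, Γ(X^{(m+2)}) = b}`. -/
noncomputable def yMargin2 {X 𝒴 : Type*} [Countable X] (μ : X → ℝ) (P : X → X → ℝ)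
    (Γ : X → 𝒴) (m : ℕ) (a b : 𝒴) : ℝ :=
  ∑' x : Fin (m + 2) → X,
    if Γ (x (Fin.castSucc (Fin.last m))) = a ∧ Γ (x (Fin.last (m + 1))) = b
    then ctPathProb μ P x else 0

section helpers

variable {X : Type*} [Countable X] (μ : X → ℝ) (P : X → X → ℝ)

lemma ctPathProb_nonneg (hμ0 : ∀ x, 0 ≤ μ x) (hP0 : ∀ i j, 0 ≤ P i j) {m : ℕ}
    (x : Fin (m + 1) → X) : 0 ≤ ctPathProb μ P x :=
  mul_nonneg (hμ0 _) (Finset.prod_nonneg fun _ _ => hP0 _ _)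

lemma ctPathProb_snoc {m : ℕ} (x : Fin (m + 1) → X) (j : X) :
    ctPathProb μ P (Fin.snoc x j) = ctPathProb μ P x * P (x (Fin.last m)) j := by
  unfold ctPathProb
  rw [Fin.prod_univ_castSucc]
  have h0 : (Fin.snoc x j : Fin (m + 2) → X) 0 = x 0 := by
    have : (0 : Fin (m + 2)) = Fin.castSucc 0 := rfl
    rw [this, Fin.snoc_castSucc]
  rw [h0]
  have h1 : ∀ l : Fin m,
      P ((Fin.snoc x j : Fin (m+2) → X) l.castSucc.castSucc)
        ((Fin.snoc x j : Fin (m+2) → X) l.castSucc.succ)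
      = P (x l.castSucc) (x l.succ) := by
    intro l
    rw [Fin.snoc_castSucc, Fin.succ_castSucc, Fin.snoc_castSucc]
  have h2 : P ((Fin.snoc x j : Fin (m+2) → X) (Fin.last m).castSucc)
      ((Fin.snoc x j : Fin (m+2) → X) (Fin.last m).succ) = P (x (Fin.last m)) j := by
    rw [Fin.snoc_castSucc]
    have : (Fin.last m).succ = Fin.last (m + 1) := rfl
    rw [this, Fin.snoc_last]
  rw [Finset.prod_congr rfl (fun l _ => h1 l), h2]
  ring

/-- The `snoc` equivalence. -/

def snocEquiv (X : Type*) (m : ℕ) : ((Fin (m + 1) → X) × X) ≃ (Fin (m + 2) → X) where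
  toFun p := Fin.snoc p.1 p.2
  invFun x := (Fin.init x, x (Fin.last (m + 1)))
  left_inv p := by simp [Fin.init_snoc, Fin.snoc_last]
  right_inv x := by simp [Fin.snoc_init_self]

lemma iteCongr {α : Sort*} {p q : Prop} {h1 : Decidable p} {h2 : Decidable q}
    (hpq : p ↔ q) (x y : α) : @ite α p h1 x y = @ite α q h2 x y := by
  by_cases hp : p
  · rw [if_pos hp, if_pos (hpq.mp hp)]
  · rw [if_neg hp, if_neg fun h => hp (hpq.mpr h)]

lemma snocEquiv_apply {X : Type*} {m : ℕ} (p : (Fin (m + 1) → X) × X) :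
    snocEquiv X m p = Fin.snoc p.1 p.2 := rfl

set_option maxHeartbeats 1000000 in
lemma summable_ctPathProb (hμ0 : ∀ x, 0 ≤ μ x) (hμS : Summable μ)
    (hP0 : ∀ i j, 0 ≤ P i j) (hPS : ∀ i, Summable (P i)) (hP1 : ∀ i, ∑' j, P i j = 1) :
    ∀ m : ℕ, Summable (fun x : Fin (m + 1) → X => ctPathProb μ P x) := by
  intro m
  induction m with
  | zero =>
    have h : (fun x : Fin 1 → X => ctPathProb μ P x) = (μ ∘ (Equiv.funUnique (Fin 1) X)) := by
      funext x
      show μ (x 0) * ∏ l : Fin 0, P (x l.castSucc) (x l.succ) = μ (x default)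
      simp
    rw [h]
    exact (Equiv.funUnique (Fin 1) X).summable_iff.mpr hμS
  | succ m ih =>
    rw [← (snocEquiv X m).summable_iff]
    have heq : (fun x : Fin (m + 2) → X => ctPathProb μ P x) ∘ (snocEquiv X m)
        = fun p : (Fin (m + 1) → X) × X => ctPathProb μ P p.1 * P (p.1 (Fin.last m)) p.2 := by
      funext p
      exact ctPathProb_snoc μ P p.1 p.2
    rw [heq]
    refine (summable_prod_of_nonneg
      (fun p => mul_nonneg (ctPathProb_nonneg μ P hμ0 hP0 _) (hP0 _ _))).mpr ⟨?_, ?_⟩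
    · intro x
      simpa using (hPS (x (Fin.last m))).mul_left (ctPathProb μ P x)
    · have : (fun x : Fin (m+1) → X => ∑' j, ctPathProb μ P x * P (x (Fin.last m)) j)
          = fun x => ctPathProb μ P x := by
        funext x
        rw [tsum_mul_left, hP1]
        ring
      rw [this]
      exact ih

end helpers

/-- If the transition matrix of a countable-state homogeneous Markov chain has the form
`P = c₁U + (1-c₁)𝟏` with all rows of `U` equal to a unitary vector `u`, then
`(Γ(X^{(n)}))` is a Markov chain for every function `Γ`: conditioned on any history of
positive probability, the next-step conditional distribution only depends on the
current value of `Γ(X)`. -/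
theorem stmt16 {X 𝒴 : Type*} [Countable X]
    (μ : X → ℝ) (P : X → X → ℝ) (u : X → ℝ) (c₁ : ℝ)
    (hμ0 : ∀ x, 0 ≤ μ x) (hμ1 : ∑' x, μ x = 1)
    (hP0 : ∀ i j, 0 ≤ P i j) (hP1 : ∀ i, ∑' j, P i j = 1)
    (hu0 : ∀ x, 0 ≤ u x) (hu1 : ∑' x, u x = 1)
    (hc0 : 0 ≤ c₁) (hc1 : c₁ ≤ 1)
    (hform : ∀ i j, P i j = c₁ * u j + (1 - c₁) * (if i = j then 1 else 0))
    (Γ : X → 𝒴) :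
    ∀ (m : ℕ) (y : Fin (m + 2) → 𝒴),
      0 < yPathProb μ P Γ m (Fin.init y) →
      yPathProb μ P Γ (m + 1) y / yPathProb μ P Γ m (Fin.init y) =
        yMargin2 μ P Γ m (y (Fin.castSucc (Fin.last m))) (y (Fin.last (m + 1))) /
          yMargin1 μ P Γ m (y (Fin.castSucc (Fin.last m))) := by
  -- basic summability facts
  have hμS : Summable μ := by
    by_contra h; rw [tsum_eq_zero_of_not_summable h] at hμ1; norm_num at hμ1
  have hPS : ∀ i, Summable (P i) := by
    intro i
    by_contra h
    have h1 := hP1 i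
    rw [tsum_eq_zero_of_not_summable h] at h1; norm_num at h1
  have huS : Summable u := by
    by_contra h; rw [tsum_eq_zero_of_not_summable h] at hu1; norm_num at hu1
  have ctS := summable_ctPathProb μ P hμ0 hμS hP0 hPS hP1
  have ct0 : ∀ {m : ℕ} (x : Fin (m+1) → X), 0 ≤ ctPathProb μ P x :=
    fun x => ctPathProb_nonneg μ P hμ0 hP0 x
  intro m y hpos
  set a := y (Fin.castSucc (Fin.last m)) with ha
  set b := y (Fin.last (m + 1)) with hb
  -- the common conditional probability
  set Sb : ℝ := ∑' j, if Γ j = b then u j else 0 with hSb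
  set q : ℝ := c₁ * Sb + (1 - c₁) * (if a = b then 1 else 0) with hq
  -- row sum lemma
  have rowsum : ∀ i : X, Γ i = a → (∑' j, if Γ j = b then P i j else 0) = q := by
    intro i hi
    have hsplit : ∀ j, (if Γ j = b then P i j else 0)
        = c₁ * (if Γ j = b then u j else 0)
          + (1 - c₁) * (if Γ j = b then (if i = j then 1 else 0) else 0) := by
      intro j
      by_cases h : Γ j = b <;> simp [h, hform i j]
    have hS1 : Summable fun j => c₁ * (if Γ j = b then u j else 0) := by
      apply Summable.mul_left
      apply huS.of_nonneg_of_le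
      · intro j; by_cases h : Γ j = b <;> simp [h, hu0 j]
      · intro j; by_cases h : Γ j = b <;> simp [h, hu0 j]
    have hS2 : Summable fun j => (1 - c₁) * (if Γ j = b then (if i = j then 1 else 0) else 0) := by
      apply Summable.mul_left
      apply summable_of_finite_support
      apply Set.Finite.subset (Set.finite_singleton i)
      intro j hj
      simp only [Function.mem_support] at hj
      by_contra hne
      simp only [Set.mem_singleton_iff] at hne
      apply hj
      simp [Ne.symm hne]
    rw [tsum_congr hsplit, Summable.tsum_add hS1 hS2, tsum_mul_left, tsum_mul_left]
    have h2 : (∑' j, if Γ j = b then (if i = j then 1 else 0 : ℝ) else 0)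
        = (if a = b then 1 else 0) := by
      have hpt : ∀ j, (if Γ j = b then (if i = j then 1 else 0 : ℝ) else 0)
          = if j = i then (if a = b then 1 else 0) else 0 := by
        intro j
        by_cases hji : j = i
        · subst hji; simp [hi]
        · simp [hji, Ne.symm hji]
      simp only [hpt]
      exact tsum_ite_eq i _
    rw [h2, hq, hSb]
  -- the key factorization lemma
  have key : ∀ (Q : (Fin (m + 1) → X) → Prop), (∀ z, Q z → Γ (z (Fin.last m)) = a) →
      (∑' x : Fin (m + 2) → X,
        if Q (Fin.init x) ∧ Γ (x (Fin.last (m + 1))) = b then ctPathProb μ P x else 0)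
      = (∑' x : Fin (m + 1) → X, if Q x then ctPathProb μ P x else 0) * q := by
    intro Q hQ
    rw [← (snocEquiv X m).tsum_eq]
    have heq : ∀ p : (Fin (m + 1) → X) × X,
        (if Q (Fin.init (snocEquiv X m p)) ∧ Γ ((snocEquiv X m p) (Fin.last (m + 1))) = b
          then ctPathProb μ P (snocEquiv X m p) else 0)
        = if Q p.1 then (if Γ p.2 = b then ctPathProb μ P p.1 * P (p.1 (Fin.last m)) p.2 else 0)
          else 0 := by
      intro p
      have h1 : Fin.init ((snocEquiv X m) p) = p.1 := Fin.init_snoc _ _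
      have h2 : (snocEquiv X m p) (Fin.last (m + 1)) = p.2 := by
        rw [snocEquiv_apply]
        exact Fin.snoc_last _ _
      have h3 : ctPathProb μ P (snocEquiv X m p) = ctPathProb μ P p.1 * P (p.1 (Fin.last m)) p.2 :=
        ctPathProb_snoc μ P p.1 p.2
      rw [h1, h2, h3]
      by_cases hq1 : Q p.1 <;> by_cases hq2 : Γ p.2 = b <;> simp [hq1, hq2]
    rw [tsum_congr heq]
    have hsum : Summable fun p : (Fin (m + 1) → X) × X =>
        if Q p.1 then (if Γ p.2 = b then ctPathProb μ P p.1 * P (p.1 (Fin.last m)) p.2 else 0)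
        else 0 := by
      have hbig : Summable fun p : (Fin (m + 1) → X) × X =>
          ctPathProb μ P p.1 * P (p.1 (Fin.last m)) p.2 := by
        have := (ctS (m + 1))
        rw [← (snocEquiv X m).summable_iff] at this
        have heq2 : (fun x : Fin (m + 2) → X => ctPathProb μ P x) ∘ (snocEquiv X m)
            = fun p : (Fin (m + 1) → X) × X =>
              ctPathProb μ P p.1 * P (p.1 (Fin.last m)) p.2 := by
          funext p; exact ctPathProb_snoc μ P p.1 p.2
        rwa [heq2] at this
      apply hbig.of_nonneg_of_le
      · intro p
        by_cases hq1 : Q p.1 <;> by_cases hq2 : Γ p.2 = b <;>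
          simp [hq1, hq2, mul_nonneg (ct0 _) (hP0 _ _)]
      · intro p
        by_cases hq1 : Q p.1 <;> by_cases hq2 : Γ p.2 = b <;>
          simp [hq1, hq2, mul_nonneg (ct0 _) (hP0 _ _)]
    rw [Summable.tsum_prod' hsum hsum.prod_factor]
    have hinner : ∀ x : Fin (m + 1) → X,
        (∑' j, if Q x then (if Γ j = b then ctPathProb μ P x * P (x (Fin.last m)) j else 0) else 0)
        = (if Q x then ctPathProb μ P x else 0) * q := by
      intro x
      by_cases hq1 : Q x
      · simp only [hq1, if_true]
        have : (fun j => if Γ j = b then ctPathProb μ P x * P (x (Fin.last m)) j else 0)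
            = fun j => ctPathProb μ P x * (if Γ j = b then P (x (Fin.last m)) j else 0) := by
          funext j; by_cases h : Γ j = b <;> simp [h]
        rw [this, tsum_mul_left, rowsum _ (hQ x hq1)]
      · simp [hq1]
    rw [tsum_congr hinner, tsum_mul_right]
  -- apply to the path probability
  have hpath : yPathProb μ P Γ (m + 1) y = yPathProb μ P Γ m (Fin.init y) * q := by
    unfold yPathProb
    have hk := key (fun z => ∀ l : Fin (m + 1), Γ (z l) = Fin.init y l)
      (fun z hz => hz (Fin.last m))
    refine ((tsum_congr fun x => ?_).trans hk).trans
      (congrArg (fun t => t * q) (tsum_congr fun x => iteCongr Iff.rfl _ _))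
    have hiff : (∀ l : Fin (m + 2), Γ (x l) = y l)
        ↔ ((∀ l : Fin (m + 1), Γ (Fin.init x l) = Fin.init y l)
            ∧ Γ (x (Fin.last (m + 1))) = y (Fin.last (m + 1))) := by
      constructor
      · intro h
        exact ⟨fun l => h l.castSucc, h (Fin.last (m + 1))⟩
      · intro ⟨h1, h2⟩ l
        refine Fin.lastCases ?_ ?_ l
        · exact h2
        · intro i
          exact h1 i
    exact iteCongr hiff _ _
  have hmarg : yMargin2 μ P Γ m a b = yMargin1 μ P Γ m a * q := by
    unfold yMargin2 yMargin1
    have hk := key (fun z => Γ (z (Fin.last m)) = a) (fun z hz => hz)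
    exact (tsum_congr fun x => rfl).trans hk
  -- positivity of yMargin1
  have hm1pos : 0 < yMargin1 μ P Γ m a := by
    have hle : yPathProb μ P Γ m (Fin.init y) ≤ yMargin1 μ P Γ m a := by
      unfold yPathProb yMargin1
      apply Summable.tsum_le_tsum
      · intro x
        by_cases h : ∀ l, Γ (x l) = Fin.init y l
        · have hlast : Γ (x (Fin.last m)) = a := h (Fin.last m)
          rw [if_pos h, if_pos hlast]
        · by_cases h2 : Γ (x (Fin.last m)) = a <;> simp [h, h2, ct0 x]
      · apply (ctS m).of_nonneg_of_le
        · intro x; by_cases h : ∀ l, Γ (x l) = Fin.init y l <;> simp [h, ct0 x]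
        · intro x; by_cases h : ∀ l, Γ (x l) = Fin.init y l <;> simp [h, ct0 x]
      · apply (ctS m).of_nonneg_of_le
        · intro x; by_cases h : Γ (x (Fin.last m)) = a <;> simp [h, ct0 x]
        · intro x; by_cases h : Γ (x (Fin.last m)) = a <;> simp [h, ct0 x]
    linarith
  rw [hpath, hmarg, mul_comm (yPathProb μ P Γ m (Fin.init y)) q,
    mul_comm (yMargin1 μ P Γ m a) q, mul_div_assoc, mul_div_assoc,
    div_self (ne_of_gt hpos), div_self (ne_of_gt hm1pos), mul_one]
end

section
/- Let g : {0,1}³ → ℤ₄ be defined by g(x_1,x_2,x_3) = x_1 + 2x_2 + 3x_3, the arithmetic taken in the ring ℤ₄ of integers modulo 4 (with {0,1} ⊆ ℤ₄). For every finite field 𝔉, if there exist functions k_t : {0,1} → 𝔉 (t = 1,2,3) and h : 𝔉 → ℤ₄ such that g(x_1,x_2,x_3) = h(k_1(x_1) + k_2(x_2) + k_3(x_3)) for all (x_1,x_2,x_3) ∈ {0,1}³, then the restriction of h to the set 𝒮 = k_1({0,1}) + k_2({0,1}) + k_3({0,1}) = { k_1(a)+k_2(b)+k_3(c) : a,b,c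 ∈ {0,1} } ⊆ 𝔉 is not injective. -/
/-!
Put `u = k₁ 1 - k₁ 0`, `v = k₂ 1 - k₂ 0`, `w = k₃ 1 - k₃ 0`. If `h` were injective on `𝒮`, the
collisions `g(1,1,0) = g(0,0,1)`, `g(1,0,1) = g(0,0,0)` and `g(0,1,1) = g(1,0,0)` would give
`u + v = w`, `u + w = 0` and `v + w = u`, hence `v = -2u` and `2v = 0`. In a field this forces
`v = 0` whatever the characteristic, contradicting `g(0,1,0) ≠ g(0,0,0)`.
-/

theorem eq_zero_of_eq_two_mul_of_two_mul_eq_zero {R : Type*} [NonAssocSemiring R]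
    [NoZeroDivisors R] {x y : R} (hxy : x = 2 * y) (hx : 2 * x = 0) : x = 0 := by
  rcases mul_eq_zero.mp hx with h2 | hx0
  · rw [hxy, h2, zero_mul]
  · exact hx0

def weightedSum (a b c : Fin 2) : ZMod 4 :=
  ((a : ℕ) : ZMod 4) + 2 * ((b : ℕ) : ZMod 4) + 3 * ((c : ℕ) : ZMod 4)

theorem stmt18_general (F : Type*) [Field F]
    (k₁ k₂ k₃ : Fin 2 → F) (h : F → ZMod 4)
    (hpres : ∀ a b c : Fin 2,
      ((a : ℕ) : ZMod 4) + 2 * ((b : ℕ) : ZMod 4) + 3 * ((c : ℕ) : ZMod 4) =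
        h (k₁ a + k₂ b + k₃ c)) :
    ¬ Set.InjOn h {s : F | ∃ a b c : Fin 2, s = k₁ a + k₂ b + k₃ c} := by
  intro hinj
  have collide (a b c a' b' c' : Fin 2) (he : weightedSum a b c = weightedSum a' b' c') :
      k₁ a + k₂ b + k₃ c = k₁ a' + k₂ b' + k₃ c' :=
    hinj ⟨a, b, c, rfl⟩ ⟨a', b', c', rfl⟩ ((hpres a b c).symm.trans (he.trans (hpres a' b' c')))
  have e₁ := collide 1 1 0 0 0 1 (by decide)
  have e₂ := collide 1 0 1 0 0 0 (by decide)
  have e₃ := collide 0 1 1 1 0 0 (by decide)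
  have hv : k₂ 1 - k₂ 0 = 0 :=
    eq_zero_of_eq_two_mul_of_two_mul_eq_zero (y := -(k₁ 1 - k₁ 0))
      (by linear_combination e₁ + e₂) (by linear_combination e₁ + e₃)
  have hg : weightedSum 0 1 0 = weightedSum 0 0 0 := by
    rw [weightedSum, weightedSum, hpres, hpres, sub_eq_zero.mp hv]
  exact absurd hg (by decide)

/-- For `g(x₁,x₂,x₃) = x₁ + 2x₂ + 3x₃ : {0,1}³ → ℤ₄` and any finite field `F`, if
`g(x₁,x₂,x₃) = h(k₁(x₁) + k₂(x₂) + k₃(x₃))` for functions `k_t : {0,1} → F` and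
`h : F → ℤ₄`, then `h` restricted to `𝒮 = k₁({0,1}) + k₂({0,1}) + k₃({0,1})` is not
injective. -/
theorem stmt18 (F : Type*) [Field F] [Fintype F]
    (k₁ k₂ k₃ : Fin 2 → F) (h : F → ZMod 4)
    (hpres : ∀ a b c : Fin 2,
      ((a : ℕ) : ZMod 4) + 2 * ((b : ℕ) : ZMod 4) + 3 * ((c : ℕ) : ZMod 4) =
        h (k₁ a + k₂ b + k₃ c)) :
    ¬ Set.InjOn h {s : F | ∃ a b c : Fin 2, s = k₁ a + k₂ b + k₃ c} :=
  stmt18_general F k₁ k₂ k₃ h hpres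
end
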